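/- Let Λ be a row-finite source-free k-graph. The cycline subalgebra M_Λ is regular in C*(Λ): every standard generator s_α s_β* (α, β ∈ Λ, s(α)=s(β)) is a normalizer of M_Λ, i.e., (s_α s_β*) M_Λ (s_α s_β*)* ∪ (s_α s_β*)* M_Λ (s_α s_β*) ⊆ M_Λ; consequently the normalizer set N(M_Λ) generates C*(Λ). -/
import Mathlib


open scoped BigOperators

/-- A row-finite, source-free `k`-graph: a countable small category together with a degree
functor `d : Λ → ℕ^k` satisfying the unique factorization property. -/
structure KGraph (k : ℕ) where
  Obj : Type
  Mor : Type
  countable_mor : Countable Mor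
  src : Mor → Obj
  rng : Mor → Obj
  idm : Obj → Mor
  comp : (μ ν : Mor) → src μ = rng ν → Mor
  src_idm : ∀ v, src (idm v) = v
  rng_idm : ∀ v, rng (idm v) = v
  comp_idm_left : ∀ μ (h : src (idm (rng μ)) = rng μ), comp (idm (rng μ)) μ h = μ
  comp_idm_right : ∀ μ (h : src μ = rng (idm (src μ))), comp μ (idm (src μ)) h = μ
  src_comp : ∀ μ ν h, src (comp μ ν h) = src ν
  rng_comp : ∀ μ ν h, rng (comp μ ν h) = rng μ
  comp_assoc : ∀ μ ν ξ (h1 : src μ = rng ν) (h2 : src ν = rng ξ)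
    (h3 : src (comp μ ν h1) = rng ξ) (h4 : src μ = rng (comp ν ξ h2)),
    comp (comp μ ν h1) ξ h3 = comp μ (comp ν ξ h2) h4
  d : Mor → Fin k → ℕ
  d_idm : ∀ v, d (idm v) = 0
  d_comp : ∀ μ ν h, d (comp μ ν h) = d μ + d ν
  factor : ∀ (ξ : Mor) (m n : Fin k → ℕ), d ξ = m + n →
    ∃! p : Mor × Mor, ∃ h : src p.1 = rng p.2, d p.1 = m ∧ d p.2 = n ∧ comp p.1 p.2 h = ξ
  rowFinite : ∀ (v : Obj) (n : Fin k → ℕ), {μ : Mor | rng μ = v ∧ d μ = n}.Finite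
  sourceFree : ∀ (v : Obj) (n : Fin k → ℕ), ∃ μ : Mor, rng μ = v ∧ d μ = n

namespace KGraph

variable {k : ℕ} {Λ : KGraph k}

/-- An infinite path in a `k`-graph: a degree-preserving functor from `Ω_k` to `Λ`,
recorded by its segments `x(m, n)` for `m ≤ n` in `ℕ^k`. -/
structure InfPath (Λ : KGraph k) where
  seg : (m n : Fin k → ℕ) → m ≤ n → Λ.Mor
  d_seg : ∀ m n h, Λ.d (seg m n h) = fun i => n i - m i
  src_rng : ∀ m n p (h1 : m ≤ n) (h2 : n ≤ p),
    Λ.src (seg m n h1) = Λ.rng (seg n p h2)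
  comp_seg : ∀ m n p (h1 : m ≤ n) (h2 : n ≤ p)
    (h3 : Λ.src (seg m n h1) = Λ.rng (seg n p h2)),
    Λ.comp (seg m n h1) (seg n p h2) h3 = seg m p (h1.trans h2)

/-- The range vertex `x(0) = r(x)` of an infinite path. -/
def InfPath.head (x : Λ.InfPath) : Λ.Obj := Λ.src (x.seg 0 0 le_rfl)

lemma InfPath.head_eq_rng (x : Λ.InfPath) (p : Fin k → ℕ) (h : 0 ≤ p) :
    Λ.rng (x.seg 0 p h) = x.head := (x.src_rng 0 0 p le_rfl h).symm

/-- The shift `σ^p(x)` of an infinite path. -/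
def InfPath.shift (x : Λ.InfPath) (p : Fin k → ℕ) : Λ.InfPath where
  seg m n h := x.seg (m + p) (n + p) (fun i => Nat.add_le_add_right (h i) _)
  d_seg m n h := by
    rw [x.d_seg]; funext i; simp [Nat.add_sub_add_right]
  src_rng m n q h1 h2 := x.src_rng _ _ _ _ _
  comp_seg m n q h1 h2 h3 := x.comp_seg _ _ _ _ _ _

/-- `μ ∼ ν` : `s(μ) = s(ν)` and `μ x = ν x` for every infinite path `x ∈ s(μ)Λ^∞`;
equality of the infinite paths `μ x` and `ν x` is recorded as equality of all their
initial segments. -/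
def sim (Λ : KGraph k) (μ ν : Λ.Mor) : Prop :=
  ∃ hsrc : Λ.src μ = Λ.src ν,
    ∀ (x : Λ.InfPath) (hx : x.head = Λ.src μ) (n : Fin k → ℕ),
      Λ.d μ ≤ n → Λ.d ν ≤ n →
      Λ.comp μ (x.seg 0 (fun i => n i - Λ.d μ i) (fun _ => Nat.zero_le _))
        (hx.symm.trans (x.head_eq_rng _ _).symm)
      = Λ.comp ν (x.seg 0 (fun i => n i - Λ.d ν i) (fun _ => Nat.zero_le _))
        ((hsrc.symm.trans hx.symm).trans (x.head_eq_rng _ _).symm)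

/-- An infinite path is (eventually) periodic if `σ^m x = σ^n x` for some `m ≠ n`. -/
def InfPath.eventuallyPeriodic (x : Λ.InfPath) : Prop :=
  ∃ m n : Fin k → ℕ, m ≠ n ∧ x.shift m = x.shift n

/-- A `k`-graph is aperiodic if every vertex receives a non-periodic infinite path. -/
def aperiodic (Λ : KGraph k) : Prop :=
  ∀ v : Λ.Obj, ∃ x : Λ.InfPath, x.head = v ∧ ¬ x.eventuallyPeriodic

end KGraph
section CStar
namespace KGraph

variable {k : ℕ} {Λ : KGraph k}

lemma comp_congr {μ μ' ν ν' : Λ.Mor} (hμ : μ = μ') (hν : ν = ν')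
    (h : Λ.src μ = Λ.rng ν) (h' : Λ.src μ' = Λ.rng ν') :
    Λ.comp μ ν h = Λ.comp μ' ν' h' := by subst hμ; subst hν; rfl

lemma seg_congr (x : Λ.InfPath) {m n n' : Fin k → ℕ} (hn : n = n')
    (h : m ≤ n) (h' : m ≤ n') : x.seg m n h = x.seg m n' h' := by subst hn; rfl

lemma pile {a b : Fin k → ℕ} (h : a ≤ b) : ∀ i, a i ≤ b i := h

lemma pige {a b : Fin k → ℕ} (h : ∀ i, a i ≤ b i) : a ≤ b := h

lemma comp_unique {A' B a b : Λ.Mor} {hA : Λ.src A' = Λ.rng a} {hB : Λ.src B = Λ.rng b}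
    (h : Λ.comp A' a hA = Λ.comp B b hB) (hd : Λ.d A' = Λ.d B) : A' = B ∧ a = b := by
  have hda : Λ.d a = Λ.d b := by
    have h1 := Λ.d_comp A' a hA
    rw [h, Λ.d_comp B b hB] at h1
    funext i
    have e1 := congrFun h1 i
    have e2 := congrFun hd i
    simp [Pi.add_apply] at e1
    omega
  have hfac := Λ.factor (Λ.comp B b hB) (Λ.d A') (Λ.d a) (by rw [Λ.d_comp, hd, hda])
  have e1 : (A', a) = (B, b) :=
    hfac.unique ⟨hA, rfl, rfl, h⟩ ⟨hB, hd.symm, hda.symm, rfl⟩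
  exact ⟨congrArg Prod.fst e1, congrArg Prod.snd e1⟩

lemma eq_idm_of_d_eq_zero {ξ : Λ.Mor} (h : Λ.d ξ = 0) : ξ = Λ.idm (Λ.rng ξ) := by
  have hfac := Λ.factor ξ 0 0 (by rw [h]; funext i; simp)
  have e : (ξ, Λ.idm (Λ.src ξ)) = (Λ.idm (Λ.rng ξ), ξ) :=
    hfac.unique ⟨(Λ.rng_idm _).symm, h, Λ.d_idm _, Λ.comp_idm_right ξ _⟩
      ⟨(Λ.src_idm _).trans (Λ.rng_idm _).symm |>.trans (by rw [Λ.rng_idm]), Λ.d_idm _, h, Λ.comp_idm_left ξ _⟩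
  exact congrArg Prod.fst e

lemma comp_assoc' (μ ν ξ : Λ.Mor) (h1 : Λ.src μ = Λ.rng ν) (h2 : Λ.src ν = Λ.rng ξ) :
    Λ.comp (Λ.comp μ ν h1) ξ (by rw [Λ.src_comp]; exact h2) =
    Λ.comp μ (Λ.comp ν ξ h2) (by rw [Λ.rng_comp]; exact h1) :=
  Λ.comp_assoc μ ν ξ h1 h2 _ _

lemma comp_idm_right' {μ e : Λ.Mor} (he : e = Λ.idm (Λ.src μ)) (h : Λ.src μ = Λ.rng e) :
    Λ.comp μ e h = μ := by
  subst he; exact Λ.comp_idm_right μ h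

lemma comp_idm_left' {μ e : Λ.Mor} (he : e = Λ.idm (Λ.rng μ)) (h : Λ.src e = Λ.rng μ) :
    Λ.comp e μ h = μ := by
  subst he; exact Λ.comp_idm_left μ h

end KGraph
namespace KGraph

variable {k : ℕ} {Λ : KGraph k}

/-- Auxiliary: the big segment `ξ · x(0, (n ⊔ d ξ) - d ξ)`. -/
noncomputable def preB (x : Λ.InfPath) (ξ : Λ.Mor) (hx : x.head = Λ.src ξ)
    (n : Fin k → ℕ) : Λ.Mor :=
  Λ.comp ξ (x.seg 0 (fun i => max (n i) (Λ.d ξ i) - Λ.d ξ i) (fun _ => Nat.zero_le _))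
    (by rw [x.head_eq_rng]; exact hx.symm)

lemma d_preB (x : Λ.InfPath) (ξ : Λ.Mor) (hx : x.head = Λ.src ξ) (n : Fin k → ℕ) :
    Λ.d (preB x ξ hx n) = fun i => max (n i) (Λ.d ξ i) := by
  unfold preB
  rw [Λ.d_comp, x.d_seg]
  funext i
  simp only [Pi.add_apply, Pi.zero_apply, Nat.sub_zero]
  omega

lemma rng_preB (x : Λ.InfPath) (ξ : Λ.Mor) (hx : x.head = Λ.src ξ) (n : Fin k → ℕ) :
    Λ.rng (preB x ξ hx n) = Λ.rng ξ := Λ.rng_comp _ _ _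

/-- First factor of `preB n` of degree `n`. -/
noncomputable def preF (x : Λ.InfPath) (ξ : Λ.Mor) (hx : x.head = Λ.src ξ)
    (n : Fin k → ℕ) : Λ.Mor × Λ.Mor :=
  (Λ.factor (preB x ξ hx n) n (fun i => max (n i) (Λ.d ξ i) - n i)
    (by rw [d_preB]; funext i; simp only [Pi.add_apply]; omega)).exists.choose

lemma preF_spec (x : Λ.InfPath) (ξ : Λ.Mor) (hx : x.head = Λ.src ξ) (n : Fin k → ℕ) :
    ∃ hc : Λ.src (preF x ξ hx n).1 = Λ.rng (preF x ξ hx n).2,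
      Λ.d (preF x ξ hx n).1 = n ∧
      Λ.d (preF x ξ hx n).2 = (fun i => max (n i) (Λ.d ξ i) - n i) ∧
      Λ.comp (preF x ξ hx n).1 (preF x ξ hx n).2 hc = preB x ξ hx n :=
  (Λ.factor (preB x ξ hx n) n (fun i => max (n i) (Λ.d ξ i) - n i)
    (by rw [d_preB]; funext i; simp only [Pi.add_apply]; omega)).exists.choose_spec

lemma preF_mono (x : Λ.InfPath) (ξ : Λ.Mor) (hx : x.head = Λ.src ξ)
    {m n : Fin k → ℕ} (hmn : m ≤ n) :
    ∃ (Q : Λ.Mor) (hc : Λ.src (preF x ξ hx m).1 = Λ.rng Q),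
      Λ.d Q = (fun i => n i - m i) ∧
      Λ.comp (preF x ξ hx m).1 Q hc = (preF x ξ hx n).1 := by
  obtain ⟨hcm, hdFm, hdGm, hBm⟩ := preF_spec x ξ hx m
  obtain ⟨hcn, hdFn, hdGn, hBn⟩ := preF_spec x ξ hx n
  obtain ⟨PQ, ⟨hPQ, hdP, hdQ, hPQc⟩, -⟩ :=
    (Λ.factor (preF x ξ hx n).1 m (fun i => n i - m i)
      (by rw [hdFn]; funext i; simp only [Pi.add_apply]; exact (Nat.add_sub_cancel' (hmn i)).symm))
  obtain ⟨P, Q⟩ := PQ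
  simp only at hPQ hdP hdQ hPQc
  have hqle : (fun i => max (m i) (Λ.d ξ i) - Λ.d ξ i) ≤ (fun i => max (n i) (Λ.d ξ i) - Λ.d ξ i) := by
    intro i
    have h2 : m i ≤ n i := hmn i
    simp only
    omega
  set T := x.seg (fun i => max (m i) (Λ.d ξ i) - Λ.d ξ i) (fun i => max (n i) (Λ.d ξ i) - Λ.d ξ i) hqle with hT
  have hsc2 : Λ.src (x.seg 0 (fun i => max (m i) (Λ.d ξ i) - Λ.d ξ i) (fun _ => Nat.zero_le _)) = Λ.rng T :=
    x.src_rng _ _ _ _ _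
  have hA : x.seg 0 (fun i => max (n i) (Λ.d ξ i) - Λ.d ξ i) (fun _ => Nat.zero_le _) =
      Λ.comp (x.seg 0 (fun i => max (m i) (Λ.d ξ i) - Λ.d ξ i) (fun _ => Nat.zero_le _)) T hsc2 := by
    rw [x.comp_seg]
  have hsc3 : Λ.src ξ = Λ.rng (x.seg 0 (fun i => max (m i) (Λ.d ξ i) - Λ.d ξ i) (fun _ => Nat.zero_le _)) := by
    rw [x.head_eq_rng]; exact hx.symm
  have hsc4 : Λ.src (preB x ξ hx m) = Λ.rng T := by
    unfold preB; rw [Λ.src_comp]; exact hsc2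
  have hsc5 : Λ.src (preF x ξ hx m).2 = Λ.rng T := by
    have h5 := hsc4
    rw [← hBm, Λ.src_comp] at h5
    exact h5
  have hsc6 : Λ.src Q = Λ.rng (preF x ξ hx n).2 := by
    have h6 := hcn
    rw [← hPQc, Λ.src_comp] at h6
    exact h6
  have hBn' : preB x ξ hx n = Λ.comp (preB x ξ hx m) T hsc4 :=
    calc preB x ξ hx n
        = Λ.comp ξ (x.seg 0 (fun i => max (n i) (Λ.d ξ i) - Λ.d ξ i) (fun _ => Nat.zero_le _))
            (by rw [x.head_eq_rng]; exact hx.symm) := rfl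
      _ = Λ.comp ξ (Λ.comp (x.seg 0 (fun i => max (m i) (Λ.d ξ i) - Λ.d ξ i) (fun _ => Nat.zero_le _)) T hsc2)
            (by rw [Λ.rng_comp]; exact hsc3) := comp_congr rfl hA _ _
      _ = Λ.comp (Λ.comp ξ (x.seg 0 (fun i => max (m i) (Λ.d ξ i) - Λ.d ξ i) (fun _ => Nat.zero_le _)) hsc3) T
            (by rw [Λ.src_comp]; exact hsc2) := (comp_assoc' ξ _ T hsc3 hsc2).symm
      _ = Λ.comp (preB x ξ hx m) T hsc4 := rfl
  have e1 : preB x ξ hx n = Λ.comp (preF x ξ hx m).1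
      (Λ.comp (preF x ξ hx m).2 T hsc5) (by rw [Λ.rng_comp]; exact hcm) :=
    calc preB x ξ hx n = Λ.comp (preB x ξ hx m) T hsc4 := hBn'
      _ = Λ.comp (Λ.comp (preF x ξ hx m).1 (preF x ξ hx m).2 hcm) T (by rw [hBm]; exact hsc4) :=
          comp_congr hBm.symm rfl _ _
      _ = Λ.comp (preF x ξ hx m).1 (Λ.comp (preF x ξ hx m).2 T hsc5) _ :=
          comp_assoc' _ _ _ hcm hsc5
  have e2 : preB x ξ hx n = Λ.comp P (Λ.comp Q (preF x ξ hx n).2 hsc6)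
      (by rw [Λ.rng_comp]; exact hPQ) :=
    calc preB x ξ hx n = Λ.comp (preF x ξ hx n).1 (preF x ξ hx n).2 hcn := hBn.symm
      _ = Λ.comp (Λ.comp P Q hPQ) (preF x ξ hx n).2 (by rw [hPQc]; exact hcn) :=
          comp_congr hPQc.symm rfl _ _
      _ = Λ.comp P (Λ.comp Q (preF x ξ hx n).2 hsc6) _ := comp_assoc' _ _ _ hPQ hsc6
  have huniq := comp_unique (e1.symm.trans e2) (by rw [hdFm, hdP])
  refine ⟨Q, ?_, hdQ, ?_⟩
  · rw [huniq.1]; exact hPQ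
  · exact (comp_congr huniq.1 rfl _ hPQ).trans hPQc

end KGraph
namespace KGraph

variable {k : ℕ} {Λ : KGraph k}

noncomputable def preSeg (x : Λ.InfPath) (ξ : Λ.Mor) (hx : x.head = Λ.src ξ)
    (m n : Fin k → ℕ) (h : m ≤ n) : Λ.Mor :=
  ((Λ.factor (preF x ξ hx n).1 m (fun i => n i - m i)
    (by rw [(preF_spec x ξ hx n).choose_spec.1]; funext i; simp only [Pi.add_apply];
        exact (Nat.add_sub_cancel' (h i)).symm)).exists.choose).2

lemma preSeg_spec (x : Λ.InfPath) (ξ : Λ.Mor) (hx : x.head = Λ.src ξ)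
    (m n : Fin k → ℕ) (h : m ≤ n) :
    ∃ (H : Λ.Mor) (hc : Λ.src H = Λ.rng (preSeg x ξ hx m n h)),
      Λ.d H = m ∧ Λ.d (preSeg x ξ hx m n h) = (fun i => n i - m i) ∧
      Λ.comp H (preSeg x ξ hx m n h) hc = (preF x ξ hx n).1 := by
  obtain ⟨hc, h1, h2, h3⟩ := (Λ.factor (preF x ξ hx n).1 m (fun i => n i - m i)
    (by rw [(preF_spec x ξ hx n).choose_spec.1]; funext i; simp only [Pi.add_apply];
        exact (Nat.add_sub_cancel' (h i)).symm)).exists.choose_spec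
  exact ⟨_, hc, h1, h2, h3⟩

lemma d_preSeg (x : Λ.InfPath) (ξ : Λ.Mor) (hx : x.head = Λ.src ξ)
    (m n : Fin k → ℕ) (h : m ≤ n) :
    Λ.d (preSeg x ξ hx m n h) = fun i => n i - m i :=
  (preSeg_spec x ξ hx m n h).choose_spec.2.2.1

lemma preSeg_key (x : Λ.InfPath) (ξ : Λ.Mor) (hx : x.head = Λ.src ξ)
    (m n p : Fin k → ℕ) (h1 : m ≤ n) (h2 : n ≤ p) :
    ∃ hc : Λ.src (preSeg x ξ hx m n h1) = Λ.rng (preSeg x ξ hx n p h2),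
      Λ.comp (preSeg x ξ hx m n h1) (preSeg x ξ hx n p h2) hc
        = preSeg x ξ hx m p (h1.trans h2) := by
  obtain ⟨Q, hcQ, hdQ, hQ⟩ := preF_mono x ξ hx h2
  obtain ⟨H1, hc1, hdH1, hds1, hcomp1⟩ := preSeg_spec x ξ hx m n h1
  obtain ⟨H2, hc2, hdH2, hds2, hcomp2⟩ := preSeg_spec x ξ hx n p h2
  obtain ⟨H3, hc3, hdH3, hds3, hcomp3⟩ := preSeg_spec x ξ hx m p (h1.trans h2)
  -- F p = comp (F n) Q = comp (comp H1 (preSeg m n)) Q = comp H1 (comp (preSeg m n) Q)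
  have hsq : Λ.src (preSeg x ξ hx m n h1) = Λ.rng Q := by
    have := hcQ
    rw [← hcomp1, Λ.src_comp] at this
    exact this
  have e1 : (preF x ξ hx p).1 = Λ.comp H1 (Λ.comp (preSeg x ξ hx m n h1) Q hsq)
      (by rw [Λ.rng_comp]; exact hc1) :=
    calc (preF x ξ hx p).1 = Λ.comp (preF x ξ hx n).1 Q hcQ := hQ.symm
      _ = Λ.comp (Λ.comp H1 (preSeg x ξ hx m n h1) hc1) Q (by rw [hcomp1]; exact hcQ) :=
          comp_congr hcomp1.symm rfl _ _
      _ = Λ.comp H1 (Λ.comp (preSeg x ξ hx m n h1) Q hsq) _ := comp_assoc' _ _ _ hc1 hsq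
  have u1 := comp_unique (hcomp3.trans e1) (by rw [hdH3, hdH1])
  obtain ⟨hcn', hdFn, -, -⟩ := preF_spec x ξ hx n
  have u2 := comp_unique (hcomp2.trans hQ.symm) (by rw [hdH2, hdFn])
  have hc : Λ.src (preSeg x ξ hx m n h1) = Λ.rng (preSeg x ξ hx n p h2) := by
    rw [u2.2]; exact hsq
  refine ⟨hc, ?_⟩
  exact (comp_congr rfl u2.2 hc hsq).trans u1.2.symm

end KGraph
namespace KGraph

variable {k : ℕ} {Λ : KGraph k}

/-- The infinite path `ξ · x`. -/
noncomputable def InfPath.prepend (x : Λ.InfPath) (ξ : Λ.Mor) (hx : x.head = Λ.src ξ) :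
    Λ.InfPath where
  seg m n h := preSeg x ξ hx m n h
  d_seg m n h := d_preSeg x ξ hx m n h
  src_rng m n p h1 h2 := (preSeg_key x ξ hx m n p h1 h2).choose
  comp_seg m n p h1 h2 h3 := (preSeg_key x ξ hx m n p h1 h2).choose_spec

lemma prepend_seg_zero (x : Λ.InfPath) (ξ : Λ.Mor) (hx : x.head = Λ.src ξ)
    (n : Fin k → ℕ) (h : (0 : Fin k → ℕ) ≤ n) :
    (x.prepend ξ hx).seg 0 n h = (preF x ξ hx n).1 := by
  obtain ⟨H, hc, hdH, hds, hcomp⟩ := preSeg_spec x ξ hx 0 n h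
  have hH : H = Λ.idm (Λ.rng H) := eq_idm_of_d_eq_zero hdH
  have hrng : Λ.rng H = Λ.rng (preSeg x ξ hx 0 n h) := by
    rw [hH, Λ.src_idm] at hc; exact hc
  have : Λ.comp H (preSeg x ξ hx 0 n h) hc = preSeg x ξ hx 0 n h :=
    comp_idm_left' (hH.trans (congrArg Λ.idm hrng)) hc
  show preSeg x ξ hx 0 n h = _
  rw [← hcomp, this]

lemma prepend_head (x : Λ.InfPath) (ξ : Λ.Mor) (hx : x.head = Λ.src ξ) :
    (x.prepend ξ hx).head = Λ.rng ξ := by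
  show Λ.src ((x.prepend ξ hx).seg 0 0 le_rfl) = Λ.rng ξ
  rw [prepend_seg_zero]
  obtain ⟨hc, hdF, hdG, hcomp⟩ := preF_spec x ξ hx 0
  have hF : (preF x ξ hx 0).1 = Λ.idm (Λ.rng (preF x ξ hx 0).1) :=
    eq_idm_of_d_eq_zero hdF
  have h1 : Λ.rng (preF x ξ hx 0).1 = Λ.rng ξ := by
    have := rng_preB x ξ hx 0
    rw [← hcomp, Λ.rng_comp] at this
    exact this
  rw [hF, Λ.src_idm, h1]

lemma prepend_extend (x : Λ.InfPath) (ξ : Λ.Mor) (hx : x.head = Λ.src ξ)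
    (p : Fin k → ℕ) (h : (0 : Fin k → ℕ) ≤ fun i => Λ.d ξ i + p i)
    (hc : Λ.src ξ = Λ.rng (x.seg 0 p (fun _ => Nat.zero_le _))) :
    (x.prepend ξ hx).seg 0 (fun i => Λ.d ξ i + p i) h =
      Λ.comp ξ (x.seg 0 p (fun _ => Nat.zero_le _)) hc := by
  rw [prepend_seg_zero]
  set n : Fin k → ℕ := fun i => Λ.d ξ i + p i with hn
  obtain ⟨hcn, hdF, hdG, hcomp⟩ := preF_spec x ξ hx n
  -- preB n = comp ξ (x.seg 0 p)
  have hq : (fun i => max (n i) (Λ.d ξ i) - Λ.d ξ i) = p := by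
    funext i; simp only [hn]; omega
  have hB : preB x ξ hx n = Λ.comp ξ (x.seg 0 p (fun _ => Nat.zero_le _)) hc :=
    comp_congr rfl (seg_congr x hq _ _) _ _
  -- second factor has degree zero
  have hdG0 : Λ.d (preF x ξ hx n).2 = 0 := by
    rw [hdG]; funext i; simp only [hn, Pi.zero_apply]; omega
  have hG : (preF x ξ hx n).2 = Λ.idm (Λ.rng (preF x ξ hx n).2) := eq_idm_of_d_eq_zero hdG0
  have hrng : Λ.rng (preF x ξ hx n).2 = Λ.src (preF x ξ hx n).1 := hcn.symm
  have : Λ.comp (preF x ξ hx n).1 (preF x ξ hx n).2 hcn = (preF x ξ hx n).1 :=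
    comp_idm_right' (hG.trans (congrArg Λ.idm hrng)) hcn
  rw [← this, hcomp, hB]

end KGraph
namespace KGraph

variable {k : ℕ} {Λ : KGraph k}

lemma src_eq_rng_seg0 (μ : Λ.Mor) (x : Λ.InfPath) (hx : x.head = Λ.src μ)
    (p : Fin k → ℕ) (h : (0 : Fin k → ℕ) ≤ p) : Λ.src μ = Λ.rng (x.seg 0 p h) :=
  hx.symm.trans (x.head_eq_rng _ _).symm

lemma src_eq_rng_comp {μ a b : Λ.Mor} (h : Λ.src μ = Λ.rng a) (hab : Λ.src a = Λ.rng b) :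
    Λ.src μ = Λ.rng (Λ.comp a b hab) := by rw [Λ.rng_comp]; exact h

lemma sim_refl (μ : Λ.Mor) : Λ.sim μ μ := ⟨rfl, fun _ _ _ _ _ => rfl⟩

lemma sim_of_eq {μ ν : Λ.Mor} (h : μ = ν) : Λ.sim μ ν := by subst h; exact sim_refl μ

lemma sim_symm {μ ν : Λ.Mor} (h : Λ.sim μ ν) : Λ.sim ν μ := by
  obtain ⟨hs, hp⟩ := h
  exact ⟨hs.symm, fun x hx n h1 h2 => (hp x (hx.trans hs.symm) n h2 h1).symm⟩

/-- Key rearrangement: `(βμ) · x(0, n - d(βμ)) = β · (μ · x(0, (n - dβ) - dμ))`. -/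
lemma comp_comp_seg (β μ : Λ.Mor) (hβμ : Λ.src β = Λ.rng μ) (x : Λ.InfPath)
    (hx : x.head = Λ.src μ) (n : Fin k → ℕ) (hx2 : x.head = Λ.src (Λ.comp β μ hβμ)) :
    Λ.comp (Λ.comp β μ hβμ)
      (x.seg 0 (fun i => n i - Λ.d (Λ.comp β μ hβμ) i) (fun _ => Nat.zero_le _))
      (hx2.symm.trans (x.head_eq_rng _ _).symm)
    = Λ.comp β (Λ.comp μ
        (x.seg 0 (fun i => n i - Λ.d β i - Λ.d μ i) (fun _ => Nat.zero_le _))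
        (hx.symm.trans (x.head_eq_rng _ _).symm))
      (by rw [Λ.rng_comp]; exact hβμ) := by
  have hK : (fun i => n i - Λ.d (Λ.comp β μ hβμ) i) = fun i => n i - Λ.d β i - Λ.d μ i := by
    funext i; rw [Λ.d_comp]; simp only [Pi.add_apply]; omega
  refine Eq.trans (comp_congr rfl (seg_congr x hK _ (fun _ => Nat.zero_le _)) _
    ((Λ.src_comp _ _ _).trans (((x.head_eq_rng _ _).trans hx).symm))) ?_
  exact comp_assoc' β μ _ hβμ (hx.symm.trans (x.head_eq_rng _ _).symm)

lemma d_le_of_d_comp_le {β μ : Λ.Mor} {h} {n : Fin k → ℕ}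
    (hn : Λ.d (Λ.comp β μ h) ≤ n) : Λ.d β ≤ n ∧ Λ.d μ ≤ n := by
  constructor <;> refine KGraph.pige fun i => ?_ <;>
    · have h2 := KGraph.pile hn i
      rw [Λ.d_comp] at h2
      simp only [Pi.add_apply] at h2
      omega

lemma sim_trans {μ ν ξ : Λ.Mor} (h1 : Λ.sim μ ν) (h2 : Λ.sim ν ξ) : Λ.sim μ ξ := by
  obtain ⟨hs1, hp1⟩ := h1
  obtain ⟨hs2, hp2⟩ := h2
  refine ⟨hs1.trans hs2, ?_⟩
  intro x hx n hμ hξ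
  obtain ⟨N, hnN, hμN, hνN, hξN⟩ :
      ∃ N : Fin k → ℕ, n ≤ N ∧ Λ.d μ ≤ N ∧ Λ.d ν ≤ N ∧ Λ.d ξ ≤ N :=
    ⟨fun i => max (n i) (Λ.d ν i),
      KGraph.pige fun i => by omega,
      KGraph.pige fun i => by have := KGraph.pile hμ i; omega,
      KGraph.pige fun i => by omega,
      KGraph.pige fun i => by have := KGraph.pile hξ i; omega⟩
  have e1 := hp1 x hx N hμN hνN
  have e2 := hp2 x (hx.trans hs1) N hνN hξN
  have big : Λ.comp μ (x.seg 0 (fun i => N i - Λ.d μ i) (fun _ => Nat.zero_le _))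
      (hx.symm.trans (x.head_eq_rng _ _).symm)
      = Λ.comp ξ (x.seg 0 (fun i => N i - Λ.d ξ i) (fun _ => Nat.zero_le _))
      (((hs1.trans hs2).symm.trans hx.symm).trans (x.head_eq_rng _ _).symm) :=
    e1.trans e2
  have hleμ : (fun i => n i - Λ.d μ i) ≤ fun i => N i - Λ.d μ i :=
    KGraph.pige fun i => by have := KGraph.pile hnN i; omega
  have hleξ : (fun i => n i - Λ.d ξ i) ≤ fun i => N i - Λ.d ξ i :=
    KGraph.pige fun i => by have := KGraph.pile hnN i; omega
  have splitμ : x.seg 0 (fun i => N i - Λ.d μ i) (fun _ => Nat.zero_le _)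
      = Λ.comp (x.seg 0 (fun i => n i - Λ.d μ i) (fun _ => Nat.zero_le _))
        (x.seg (fun i => n i - Λ.d μ i) (fun i => N i - Λ.d μ i) hleμ)
        (x.src_rng _ _ _ _ _) := by rw [x.comp_seg]
  have splitξ : x.seg 0 (fun i => N i - Λ.d ξ i) (fun _ => Nat.zero_le _)
      = Λ.comp (x.seg 0 (fun i => n i - Λ.d ξ i) (fun _ => Nat.zero_le _))
        (x.seg (fun i => n i - Λ.d ξ i) (fun i => N i - Λ.d ξ i) hleξ)
        (x.src_rng _ _ _ _ _) := by rw [x.comp_seg]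
  have bμ : Λ.comp μ (x.seg 0 (fun i => N i - Λ.d μ i) (fun _ => Nat.zero_le _))
      (hx.symm.trans (x.head_eq_rng _ _).symm)
      = Λ.comp (Λ.comp μ (x.seg 0 (fun i => n i - Λ.d μ i) (fun _ => Nat.zero_le _))
          (hx.symm.trans (x.head_eq_rng _ _).symm))
        (x.seg (fun i => n i - Λ.d μ i) (fun i => N i - Λ.d μ i) hleμ)
        (by rw [Λ.src_comp]; exact x.src_rng _ _ _ _ _) := by
    refine Eq.trans (comp_congr rfl splitμ (src_eq_rng_seg0 μ x hx _ _)
      (src_eq_rng_comp (src_eq_rng_seg0 μ x hx _ _) _)) ?_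
    exact (comp_assoc' _ _ _ _ _).symm
  have bξ : Λ.comp ξ (x.seg 0 (fun i => N i - Λ.d ξ i) (fun _ => Nat.zero_le _))
      (((hs1.trans hs2).symm.trans hx.symm).trans (x.head_eq_rng _ _).symm)
      = Λ.comp (Λ.comp ξ (x.seg 0 (fun i => n i - Λ.d ξ i) (fun _ => Nat.zero_le _))
          ((((hs1.trans hs2).symm.trans hx.symm)).trans (x.head_eq_rng _ _).symm))
        (x.seg (fun i => n i - Λ.d ξ i) (fun i => N i - Λ.d ξ i) hleξ)
        (by rw [Λ.src_comp]; exact x.src_rng _ _ _ _ _) := by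
    refine Eq.trans (comp_congr rfl splitξ
      (src_eq_rng_seg0 ξ x (hx.trans (hs1.trans hs2)) _ _)
      (src_eq_rng_comp (src_eq_rng_seg0 ξ x (hx.trans (hs1.trans hs2)) _ _) _)) ?_
    exact (comp_assoc' _ _ _ _ _).symm
  have big2 := (bμ.symm.trans big).trans bξ
  have hd : Λ.d (Λ.comp μ (x.seg 0 (fun i => n i - Λ.d μ i) (fun _ => Nat.zero_le _))
      (hx.symm.trans (x.head_eq_rng _ _).symm))
      = Λ.d (Λ.comp ξ (x.seg 0 (fun i => n i - Λ.d ξ i) (fun _ => Nat.zero_le _))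
      ((((hs1.trans hs2).symm.trans hx.symm)).trans (x.head_eq_rng _ _).symm)) := by
    rw [Λ.d_comp, Λ.d_comp, x.d_seg, x.d_seg]
    funext i
    simp only [Pi.add_apply, Pi.zero_apply, Nat.sub_zero]
    have := KGraph.pile hμ i; have := KGraph.pile hξ i
    omega
  exact (comp_unique big2 hd).1

lemma sim_comp_left {μ ν β : Λ.Mor} (hsim : Λ.sim μ ν)
    (hβμ : Λ.src β = Λ.rng μ) (hβν : Λ.src β = Λ.rng ν) :
    Λ.sim (Λ.comp β μ hβμ) (Λ.comp β ν hβν) := by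
  obtain ⟨hs, hp⟩ := hsim
  have hss : Λ.src (Λ.comp β μ hβμ) = Λ.src (Λ.comp β ν hβν) :=
    (Λ.src_comp _ _ _).trans (hs.trans (Λ.src_comp _ _ _).symm)
  refine ⟨hss, ?_⟩
  intro x hx n h1 h2
  have hxμ : x.head = Λ.src μ := hx.trans (Λ.src_comp _ _ _)
  have hμn : Λ.d μ ≤ fun i => n i - Λ.d β i := KGraph.pige fun i => by
    have h1i := KGraph.pile h1 i
    rw [Λ.d_comp] at h1i
    simp only [Pi.add_apply] at h1i ⊢
    omega
  have hνn : Λ.d ν ≤ fun i => n i - Λ.d β i := KGraph.pige fun i => by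
    have h2i := KGraph.pile h2 i
    rw [Λ.d_comp] at h2i
    simp only [Pi.add_apply] at h2i ⊢
    omega
  have e := hp x hxμ (fun i => n i - Λ.d β i) hμn hνn
  refine (comp_comp_seg β μ hβμ x hxμ n hx).trans
    (Eq.trans (comp_congr rfl e _ (by rw [Λ.rng_comp]; exact hβν)) ?_)
  exact (comp_comp_seg β ν hβν x (hxμ.trans hs) n (hx.trans hss)).symm

lemma sim_comp_cancel {τ τ' β : Λ.Mor} (hβτ : Λ.src β = Λ.rng τ) (hβτ' : Λ.src β = Λ.rng τ')
    (hsim : Λ.sim (Λ.comp β τ hβτ) (Λ.comp β τ' hβτ')) : Λ.sim τ τ' := by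
  obtain ⟨hs, hp⟩ := hsim
  have hsττ' : Λ.src τ = Λ.src τ' :=
    (Λ.src_comp β τ hβτ).symm.trans (hs.trans (Λ.src_comp β τ' hβτ'))
  refine ⟨hsττ', ?_⟩
  intro x hx n h1 h2
  have hx2 : x.head = Λ.src (Λ.comp β τ hβτ) := hx.trans (Λ.src_comp _ _ _).symm
  have c1 : Λ.d (Λ.comp β τ hβτ) ≤ fun i => Λ.d β i + n i := KGraph.pige fun i => by
    have h1i := KGraph.pile h1 i
    rw [Λ.d_comp]
    simp only [Pi.add_apply]
    omega
  have c2 : Λ.d (Λ.comp β τ' hβτ') ≤ fun i => Λ.d β i + n i := KGraph.pige fun i => by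
    have h2i := KGraph.pile h2 i
    rw [Λ.d_comp]
    simp only [Pi.add_apply]
    omega
  have e := hp x hx2 (fun i => Λ.d β i + n i) c1 c2
  have L := comp_comp_seg β τ hβτ x hx (fun i => Λ.d β i + n i) hx2
  have R := comp_comp_seg β τ' hβτ' x (hx.trans hsττ') (fun i => Λ.d β i + n i) (hx2.trans hs)
  have big := (L.symm.trans e).trans R
  have hJτ : (fun i => (fun i => Λ.d β i + n i) i - Λ.d β i - Λ.d τ i)
      = fun i => n i - Λ.d τ i := by
    funext i; simp only; omega
  have hJτ' : (fun i => (fun i => Λ.d β i + n i) i - Λ.d β i - Λ.d τ' i)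
      = fun i => n i - Λ.d τ' i := by
    funext i; simp only; omega
  have big2 : Λ.comp β (Λ.comp τ (x.seg 0 (fun i => n i - Λ.d τ i) (fun _ => Nat.zero_le _))
        (hx.symm.trans (x.head_eq_rng _ _).symm)) (by rw [Λ.rng_comp]; exact hβτ)
      = Λ.comp β (Λ.comp τ' (x.seg 0 (fun i => n i - Λ.d τ' i) (fun _ => Nat.zero_le _))
        ((hsττ'.symm.trans hx.symm).trans (x.head_eq_rng _ _).symm))
        (by rw [Λ.rng_comp]; exact hβτ') := by
    refine Eq.trans (comp_congr rfl (comp_congr rfl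
      (seg_congr x hJτ.symm (fun _ => Nat.zero_le _) (fun _ => Nat.zero_le _))
      (src_eq_rng_seg0 τ x hx _ _) (src_eq_rng_seg0 τ x hx _ _))
      (src_eq_rng_comp hβτ _) (src_eq_rng_comp hβτ _)) ?_
    refine big.trans ?_
    refine comp_congr rfl (comp_congr rfl
      (seg_congr x hJτ' (fun _ => Nat.zero_le _) (fun _ => Nat.zero_le _))
      (src_eq_rng_seg0 τ' x (hx.trans hsττ') _ _) (src_eq_rng_seg0 τ' x (hx.trans hsττ') _ _))
      (src_eq_rng_comp hβτ' _) (src_eq_rng_comp hβτ' _)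
  have hd : Λ.d (Λ.comp τ (x.seg 0 (fun i => n i - Λ.d τ i) (fun _ => Nat.zero_le _))
        (hx.symm.trans (x.head_eq_rng _ _).symm))
      = Λ.d (Λ.comp τ' (x.seg 0 (fun i => n i - Λ.d τ' i) (fun _ => Nat.zero_le _))
        ((hsττ'.symm.trans hx.symm).trans (x.head_eq_rng _ _).symm)) := by
    rw [Λ.d_comp, Λ.d_comp, x.d_seg, x.d_seg]
    funext i
    simp only [Pi.add_apply, Pi.zero_apply, Nat.sub_zero]
    have := KGraph.pile h1 i; have := KGraph.pile h2 i
    omega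
  exact (comp_unique big2 rfl).2

lemma sim_comp_right {μ ν lam : Λ.Mor} (hsim : Λ.sim μ ν)
    (hml : Λ.src μ = Λ.rng lam) (hnl : Λ.src ν = Λ.rng lam) :
    Λ.sim (Λ.comp μ lam hml) (Λ.comp ν lam hnl) := by
  obtain ⟨hs, hp⟩ := hsim
  have hss : Λ.src (Λ.comp μ lam hml) = Λ.src (Λ.comp ν lam hnl) :=
    (Λ.src_comp _ _ _).trans (Λ.src_comp _ _ _).symm
  refine ⟨hss, ?_⟩
  intro x hx n h1 h2
  have hxl : x.head = Λ.src lam := hx.trans (Λ.src_comp _ _ _)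
  have hyμ : (x.prepend lam hxl).head = Λ.src μ := (prepend_head x lam hxl).trans hml.symm
  have hμn : Λ.d μ ≤ n := (d_le_of_d_comp_le h1).1
  have hνn : Λ.d ν ≤ n := (d_le_of_d_comp_le h2).1
  have e := hp (x.prepend lam hxl) hyμ n hμn hνn
  have hidxμ : (fun i => n i - Λ.d μ i) = fun i => Λ.d lam i + (n i - Λ.d μ i - Λ.d lam i) := by
    funext i
    have h1i := KGraph.pile h1 i
    rw [Λ.d_comp] at h1i
    simp only [Pi.add_apply] at h1i
    omega
  have hidxν : (fun i => n i - Λ.d ν i) = fun i => Λ.d lam i + (n i - Λ.d ν i - Λ.d lam i) := by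
    funext i
    have h2i := KGraph.pile h2 i
    rw [Λ.d_comp] at h2i
    simp only [Pi.add_apply] at h2i
    omega
  have hcμ : Λ.src lam = Λ.rng (x.seg 0 (fun i => n i - Λ.d μ i - Λ.d lam i)
      (fun _ => Nat.zero_le _)) := ((x.head_eq_rng _ _).trans hxl).symm
  have hcν : Λ.src lam = Λ.rng (x.seg 0 (fun i => n i - Λ.d ν i - Λ.d lam i)
      (fun _ => Nat.zero_le _)) := ((x.head_eq_rng _ _).trans hxl).symm
  have eyμ : (x.prepend lam hxl).seg 0 (fun i => n i - Λ.d μ i) (fun _ => Nat.zero_le _)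
      = Λ.comp lam (x.seg 0 (fun i => n i - Λ.d μ i - Λ.d lam i) (fun _ => Nat.zero_le _)) hcμ :=
    (seg_congr _ hidxμ (fun _ => Nat.zero_le _) (fun _ => Nat.zero_le _)).trans (prepend_extend x lam hxl _ (fun _ => Nat.zero_le _) hcμ)
  have eyν : (x.prepend lam hxl).seg 0 (fun i => n i - Λ.d ν i) (fun _ => Nat.zero_le _)
      = Λ.comp lam (x.seg 0 (fun i => n i - Λ.d ν i - Λ.d lam i) (fun _ => Nat.zero_le _)) hcν :=
    (seg_congr _ hidxν (fun _ => Nat.zero_le _) (fun _ => Nat.zero_le _)).trans (prepend_extend x lam hxl _ (fun _ => Nat.zero_le _) hcν)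
  refine (comp_comp_seg μ lam hml x hxl n hx).trans (Eq.trans ?_
    (comp_comp_seg ν lam hnl x hxl n (hx.trans hss)).symm)
  exact (comp_congr rfl eyμ.symm (src_eq_rng_comp hml hcμ)
      (src_eq_rng_seg0 μ _ hyμ _ _)).trans
    (e.trans (comp_congr rfl eyν (src_eq_rng_seg0 ν _ (hyμ.trans hs) _ _)
      (src_eq_rng_comp hnl hcν)))

end KGraph

open scoped BigOperators

variable {k : ℕ}

/-- A Cuntz–Krieger `Λ`-family in a C*-algebra `A`. -/
structure CKFamily (Λ : KGraph k) (A : Type*) [NonUnitalCStarAlgebra A] where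
  S : Λ.Mor → A
  S_star_idm : ∀ v, star (S (Λ.idm v)) = S (Λ.idm v)
  S_idem : ∀ v, S (Λ.idm v) * S (Λ.idm v) = S (Λ.idm v)
  S_orth : ∀ v w, v ≠ w → S (Λ.idm v) * S (Λ.idm w) = 0
  S_mul : ∀ μ ν (h : Λ.src μ = Λ.rng ν), S μ * S ν = S (Λ.comp μ ν h)
  S_ck3 : ∀ μ, star (S μ) * S μ = S (Λ.idm (Λ.src μ))
  S_ck3' : ∀ μ ν, Λ.d μ = Λ.d ν → μ ≠ ν → star (S μ) * S ν = 0
  S_ck4 : ∀ v n, S (Λ.idm v) = ∑ μ ∈ (Λ.rowFinite v n).toFinset, S μ * star (S μ)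

namespace CKFamily

variable {Λ : KGraph k} {A : Type*} [NonUnitalCStarAlgebra A]

/-- The C*-subalgebra (as a subset) generated by a subset `T` of `A`. -/
def gen (T : Set A) : Set A :=
  closure (NonUnitalStarAlgebra.adjoin ℂ T : Set A)

/-- The diagonal subalgebra `D_Λ`, generated by the range projections `s_μ s_μ*`. -/
def diag (f : CKFamily Λ A) : Set A :=
  gen {a | ∃ μ : Λ.Mor, a = f.S μ * star (f.S μ)}

/-- The cycline subalgebra `M_Λ = C*(s_μ s_ν* : μ ∼ ν)`. -/
def cycline (f : CKFamily Λ A) : Set A :=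
  gen {a | ∃ μ ν : Λ.Mor, Λ.sim μ ν ∧ a = f.S μ * star (f.S ν)}

/-- The relative commutant of a subset `B` of `A`. -/
def commutant (B : Set A) : Set A := {a : A | ∀ b ∈ B, a * b = b * a}

/-- A subset `B` is a maximal abelian subalgebra of `A`. -/
def IsMasa (B : Set A) : Prop :=
  (∀ x ∈ B, ∀ y ∈ B, x * y = y * x) ∧ ∀ a : A, (∀ x ∈ B, a * x = x * a) → a ∈ B

/-- The condition that a family of star-algebra automorphisms `γ` is a gauge action
for the Cuntz–Krieger family `f`, i.e. `γ_t(s_μ) = t^{d(μ)} s_μ`. -/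
def IsGaugeAction (f : CKFamily Λ A) (γ : (Fin k → Circle) → A ≃⋆ₐ[ℂ] A) : Prop :=
  ∀ (t : Fin k → Circle) (μ : Λ.Mor),
    γ t (f.S μ) = (∏ i, (t i : ℂ) ^ Λ.d μ i) • f.S μ

end CKFamily

end CStar
section CStarLemmas

open scoped Classical

variable {k : ℕ} {Λ : KGraph k} {A : Type*} [NonUnitalCStarAlgebra A]

namespace CKFamily

lemma S_mul_idm (f : CKFamily Λ A) (μ : Λ.Mor) :
    f.S μ * f.S (Λ.idm (Λ.src μ)) = f.S μ :=
  (f.S_mul μ (Λ.idm (Λ.src μ)) (Λ.rng_idm _).symm).trans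
    (congrArg f.S (Λ.comp_idm_right μ _))

lemma idm_mul_S (f : CKFamily Λ A) {v : Λ.Obj} (τ : Λ.Mor) (hv : v = Λ.rng τ) :
    f.S (Λ.idm v) * f.S τ = f.S τ := by
  subst hv
  exact (f.S_mul (Λ.idm (Λ.rng τ)) τ (Λ.src_idm _)).trans
    (congrArg f.S (Λ.comp_idm_left τ _))

lemma idm_mul_starS (f : CKFamily Λ A) {v : Λ.Obj} (ρ : Λ.Mor) (hv : v = Λ.src ρ) :
    f.S (Λ.idm v) * star (f.S ρ) = star (f.S ρ) := by
  subst hv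
  calc f.S (Λ.idm (Λ.src ρ)) * star (f.S ρ)
      = star (f.S ρ * star (f.S (Λ.idm (Λ.src ρ)))) := by rw [star_mul, star_star]
    _ = star (f.S ρ * f.S (Λ.idm (Λ.src ρ))) := by rw [f.S_star_idm]
    _ = star (f.S ρ) := by rw [f.S_mul_idm]

/-- Expansion of a generator over paths of degree `n`. -/
lemma expand (f : CKFamily Λ A) (μ : Λ.Mor) (v : Λ.Obj) (hv : Λ.src μ = v) (n : Fin k → ℕ) :
    f.S μ = ∑ l ∈ (Λ.rowFinite v n).toFinset,
      if h : v = Λ.rng l then f.S (Λ.comp μ l (hv.trans h)) * star (f.S l) else 0 := by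
  have h0 : f.S μ = f.S μ * f.S (Λ.idm v) := by
    subst hv
    exact (f.S_mul_idm μ).symm
  rw [h0, f.S_ck4 v n, Finset.mul_sum]
  refine Finset.sum_congr rfl ?_
  intro l hl
  have hl' := (Set.Finite.mem_toFinset _).mp hl
  rw [dif_pos hl'.1.symm, ← mul_assoc, f.S_mul μ l (hv.trans hl'.1.symm)]

end CKFamily

end CStarLemmas
section CStarLemmas2

open scoped Classical

variable {k : ℕ} {Λ : KGraph k} {A : Type*} [NonUnitalCStarAlgebra A]

namespace CKFamily

/-- The generating set of the cycline algebra. -/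
def cygen (f : CKFamily Λ A) : Set A :=
  {a : A | ∃ μ ν : Λ.Mor, Λ.sim μ ν ∧ a = f.S μ * star (f.S ν)}

lemma conj_gen_mem (f : CKFamily Λ A) (α β μ ν : Λ.Mor) (hαβ : Λ.src α = Λ.src β)
    (hsim : Λ.sim μ ν) :
    (f.S α * star (f.S β)) * (f.S μ * star (f.S ν)) * star (f.S α * star (f.S β)) ∈
      Submodule.span ℂ f.cygen := by
  have hμν : Λ.src μ = Λ.src ν := hsim.1
  have he : (f.S α * star (f.S β)) * (f.S μ * star (f.S ν)) * star (f.S α * star (f.S β))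
      = ((f.S α * star (f.S β)) * f.S μ) * star ((f.S α * star (f.S β)) * f.S ν) := by
    simp only [star_mul, star_star, mul_assoc]
  rw [he, f.expand μ (Λ.src μ) rfl (Λ.d β), f.expand ν (Λ.src μ) hμν.symm (Λ.d β),
    Finset.mul_sum, Finset.mul_sum, star_sum, Finset.sum_mul_sum]
  refine Submodule.sum_mem _ fun l hl => Submodule.sum_mem _ fun l' hl' => ?_
  have hlm := (Set.Finite.mem_toFinset _).mp hl
  have hlm' := (Set.Finite.mem_toFinset _).mp hl'
  rw [dif_pos hlm.1.symm, dif_pos hlm'.1.symm]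
  by_cases hll : l = l'
  · subst hll
    -- diagonal term
    set Mc := Λ.comp μ l (Eq.trans rfl hlm.1.symm) with hMc
    set Nc := Λ.comp ν l (Eq.trans hμν.symm hlm.1.symm) with hNc
    have r1 : ∀ w : A, star (f.S l) * (f.S l * w) = f.S (Λ.idm (Λ.src l)) * w := fun w => by
      rw [← mul_assoc, f.S_ck3]
    have r2 : ∀ w : A, f.S (Λ.idm (Λ.src l)) * (star (f.S Nc) * w) = star (f.S Nc) * w :=
      fun w => by rw [← mul_assoc, f.idm_mul_starS Nc (Λ.src_comp _ _ _).symm]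
    have hterm : ((f.S α * star (f.S β)) * (f.S Mc * star (f.S l)))
          * star ((f.S α * star (f.S β)) * (f.S Nc * star (f.S l)))
        = f.S α * (star (f.S β) * (f.S Mc * (star (f.S Nc) * (f.S β * star (f.S α))))) := by
      simp only [star_mul, star_star, mul_assoc, r1, r2]
    rw [hterm]
    -- factor Mc and Nc at degree d β
    obtain ⟨pm, ⟨hcm, hdm1, hdm2, hem⟩, -⟩ :=
      (Λ.factor Mc (Λ.d β) (Λ.d μ)
        (by rw [hMc, Λ.d_comp, hlm.2]; funext i; simp only [Pi.add_apply]; omega))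
    obtain ⟨pn, ⟨hcn, hdn1, hdn2, hen⟩, -⟩ :=
      (Λ.factor Nc (Λ.d β) (Λ.d ν)
        (by rw [hNc, Λ.d_comp, hlm.2]; funext i; simp only [Pi.add_apply]; omega))
    have hMs : f.S Mc = f.S pm.1 * f.S pm.2 :=
      ((f.S_mul _ _ hcm).trans (congrArg f.S hem)).symm
    have hNs : f.S Nc = f.S pn.1 * f.S pn.2 :=
      ((f.S_mul _ _ hcn).trans (congrArg f.S hen)).symm
    by_cases e1 : pm.1 = β
    · by_cases e2 : pn.1 = β
      · -- both factor through β : a genuine generator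
        have hc1 : Λ.src β = Λ.rng pm.2 := e1 ▸ hcm
        have hc2 : Λ.src β = Λ.rng pn.2 := e2 ▸ hcn
        have hcα1 : Λ.src α = Λ.rng pm.2 := hαβ.trans hc1
        have hcα2 : Λ.src α = Λ.rng pn.2 := hαβ.trans hc2
        have rβ : ∀ w : A, star (f.S β) * (f.S β * w) = f.S (Λ.idm (Λ.src β)) * w :=
          fun w => by rw [← mul_assoc, f.S_ck3]
        have ridm1 : ∀ w : A, f.S (Λ.idm (Λ.src β)) * (f.S pm.2 * w) = f.S pm.2 * w :=
          fun w => by rw [← mul_assoc, f.idm_mul_S pm.2 hc1]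
        have ridm2 : f.S (Λ.idm (Λ.src β)) * star (f.S α) = star (f.S α) :=
          f.idm_mul_starS α hαβ.symm
        have hMα : f.S (Λ.comp α pm.2 hcα1) = f.S α * f.S pm.2 := (f.S_mul _ _ _).symm
        have hNα : f.S (Λ.comp α pn.2 hcα2) = f.S α * f.S pn.2 := (f.S_mul _ _ _).symm
        have hval : f.S α * (star (f.S β) * (f.S Mc * (star (f.S Nc) * (f.S β * star (f.S α)))))
            = f.S (Λ.comp α pm.2 hcα1) * star (f.S (Λ.comp α pn.2 hcα2)) := by
          simp only [hMs, hNs, e1, e2, hMα, hNα, star_mul, star_star, mul_assoc,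
            rβ, ridm1, ridm2]
        rw [hval]
        -- the sim relation
        have s1 : Λ.sim Mc Nc :=
          KGraph.sim_comp_right hsim (Eq.trans rfl hlm.1.symm) (Eq.trans hμν.symm hlm.1.symm)
        have eqn1 : Λ.comp β pm.2 hc1 = Mc :=
          (KGraph.comp_congr e1.symm rfl hc1 hcm).trans hem
        have eqn2 : Λ.comp β pn.2 hc2 = Nc :=
          (KGraph.comp_congr e2.symm rfl hc2 hcn).trans hen
        have s2 : Λ.sim (Λ.comp β pm.2 hc1) (Λ.comp β pn.2 hc2) :=
          KGraph.sim_trans (KGraph.sim_of_eq eqn1) (KGraph.sim_trans s1 (KGraph.sim_of_eq eqn2.symm))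
        have s3 : Λ.sim pm.2 pn.2 := KGraph.sim_comp_cancel hc1 hc2 s2
        exact Submodule.subset_span
          ⟨Λ.comp α pm.2 hcα1, Λ.comp α pn.2 hcα2,
            KGraph.sim_comp_left s3 hcα1 hcα2, rfl⟩
      · -- ν-side factor misses β : term is zero
        have rz : ∀ w : A, star (f.S pn.1) * (f.S β * w) = 0 := fun w => by
          rw [← mul_assoc, f.S_ck3' pn.1 β (hdn1.trans rfl) (fun hh => e2 hh), zero_mul]
        have : f.S α * (star (f.S β) * (f.S Mc * (star (f.S Nc) * (f.S β * star (f.S α))))) = 0 := by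
          simp only [hNs, star_mul, star_star, mul_assoc, rz, mul_zero, zero_mul]
        rw [this]
        exact Submodule.zero_mem _
    · -- μ-side factor misses β : term is zero
      have rz : ∀ w : A, star (f.S β) * (f.S pm.1 * w) = 0 := fun w => by
        rw [← mul_assoc, f.S_ck3' β pm.1 hdm1.symm (fun hh => e1 hh.symm), zero_mul]
      have : f.S α * (star (f.S β) * (f.S Mc * (star (f.S Nc) * (f.S β * star (f.S α))))) = 0 := by
        simp only [hMs, star_mul, star_star, mul_assoc, rz, mul_zero, zero_mul]
      rw [this]
      exact Submodule.zero_mem _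
  · -- off-diagonal : killed by orthogonality of the star S l * S l' factor
    have hkill : ∀ w : A, star (f.S l) * (f.S l' * w) = 0 := fun w => by
      rw [← mul_assoc, f.S_ck3' l l' (hlm.2.trans hlm'.2.symm) hll, zero_mul]
    have : ((f.S α * star (f.S β)) * (f.S (Λ.comp μ l (Eq.trans rfl hlm.1.symm)) * star (f.S l)))
        * star ((f.S α * star (f.S β)) * (f.S (Λ.comp ν l' (Eq.trans hμν.symm hlm'.1.symm)) * star (f.S l'))) = 0 := by
      simp only [star_mul, star_star, mul_assoc, hkill, mul_zero, zero_mul]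
    rw [this]
    exact Submodule.zero_mem _

end CKFamily

end CStarLemmas2
section CStarLemmas3

open scoped Classical

variable {k : ℕ} {Λ : KGraph k} {A : Type*} [NonUnitalCStarAlgebra A]

namespace CKFamily

lemma star_gen_mem (f : CKFamily Λ A) {a : A} (ha : a ∈ f.cygen) : star a ∈ f.cygen := by
  obtain ⟨μ, ν, hs, rfl⟩ := ha
  exact ⟨ν, μ, KGraph.sim_symm hs, by rw [star_mul, star_star]⟩

lemma gen_mul_gen_mem (f : CKFamily Λ A) {a b : A} (ha : a ∈ f.cygen) (hb : b ∈ f.cygen) :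
    a * b ∈ Submodule.span ℂ f.cygen := by
  obtain ⟨μ, ν, hs, rfl⟩ := ha
  obtain ⟨μ', ν', hs', rfl⟩ := hb
  have hνμ' : Λ.src μ = Λ.src ν := hs.1
  have hν'μ' : Λ.src μ' = Λ.src ν' := hs'.1
  rw [f.expand μ' (Λ.src μ') rfl (Λ.d ν), Finset.sum_mul, Finset.mul_sum]
  refine Submodule.sum_mem _ fun l hl => ?_
  have hlm := (Set.Finite.mem_toFinset _).mp hl
  rw [dif_pos hlm.1.symm]
  set Mc := Λ.comp μ' l (Eq.trans rfl hlm.1.symm) with hMc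
  obtain ⟨pn, ⟨hcn, hdn1, hdn2, hen⟩, -⟩ :=
    (Λ.factor Mc (Λ.d ν) (Λ.d μ')
      (by rw [hMc, Λ.d_comp, hlm.2]; funext i; simp only [Pi.add_apply]; omega))
  have hMs : f.S Mc = f.S pn.1 * f.S pn.2 :=
    ((f.S_mul _ _ hcn).trans (congrArg f.S hen)).symm
  by_cases e : pn.1 = ν
  · have hc1 : Λ.src ν = Λ.rng pn.2 := e ▸ hcn
    have hcμτ : Λ.src μ = Λ.rng pn.2 := hνμ'.trans hc1
    have hcν'l : Λ.src ν' = Λ.rng l := hν'μ'.symm.trans hlm.1.symm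
    have rν : ∀ w : A, star (f.S ν) * (f.S ν * w) = f.S (Λ.idm (Λ.src ν)) * w := fun w => by
      rw [← mul_assoc, f.S_ck3]
    have ridm : ∀ w : A, f.S (Λ.idm (Λ.src ν)) * (f.S pn.2 * w) = f.S pn.2 * w :=
      fun w => by rw [← mul_assoc, f.idm_mul_S pn.2 hc1]
    have hMμ : f.S (Λ.comp μ pn.2 hcμτ) = f.S μ * f.S pn.2 := (f.S_mul _ _ _).symm
    have hNν : f.S (Λ.comp ν' l hcν'l) = f.S ν' * f.S l := (f.S_mul _ _ _).symm
    have hval : f.S μ * star (f.S ν) * (f.S Mc * star (f.S l) * star (f.S ν'))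
        = f.S (Λ.comp μ pn.2 hcμτ) * star (f.S (Λ.comp ν' l hcν'l)) := by
      simp only [hMs, e, hMμ, hNν, star_mul, star_star, mul_assoc, rν, ridm]
    rw [hval]
    -- sim (μ · pn.2) (ν' · l)
    have s1 : Λ.sim (Λ.comp μ pn.2 hcμτ) (Λ.comp ν pn.2 hc1) :=
      KGraph.sim_comp_right hs hcμτ hc1
    have eqn : Λ.comp ν pn.2 hc1 = Mc := (KGraph.comp_congr e.symm rfl hc1 hcn).trans hen
    have s2 : Λ.sim Mc (Λ.comp ν' l hcν'l) :=
      KGraph.sim_comp_right hs' (Eq.trans rfl hlm.1.symm) hcν'l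
    exact Submodule.subset_span
      ⟨_, _, KGraph.sim_trans s1 (KGraph.sim_trans (KGraph.sim_of_eq eqn) s2), rfl⟩
  · have rz : ∀ w : A, star (f.S ν) * (f.S pn.1 * w) = 0 := fun w => by
      rw [← mul_assoc, f.S_ck3' ν pn.1 hdn1.symm (fun hh => e hh.symm), zero_mul]
    have : f.S μ * star (f.S ν) * (f.S Mc * star (f.S l) * star (f.S ν')) = 0 := by
      simp only [hMs, star_mul, star_star, mul_assoc, rz, mul_zero, zero_mul]
    rw [this]
    exact Submodule.zero_mem _

lemma span_mul_mem (f : CKFamily Λ A) {x y : A}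
    (hx : x ∈ Submodule.span ℂ f.cygen) (hy : y ∈ Submodule.span ℂ f.cygen) :
    x * y ∈ Submodule.span ℂ f.cygen := by
  induction hx using Submodule.span_induction with
  | mem a ha =>
    induction hy using Submodule.span_induction with
    | mem b hb => exact f.gen_mul_gen_mem ha hb
    | zero => rw [mul_zero]; exact Submodule.zero_mem _
    | add b c _ _ hb hc => rw [mul_add]; exact Submodule.add_mem _ hb hc
    | smul c b _ hb => rw [mul_smul_comm]; exact Submodule.smul_mem _ _ hb
  | zero => rw [zero_mul]; exact Submodule.zero_mem _
  | add a b _ _ ha hb => rw [add_mul]; exact Submodule.add_mem _ ha hb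
  | smul c a _ ha => rw [smul_mul_assoc]; exact Submodule.smul_mem _ _ ha

lemma span_star_mem (f : CKFamily Λ A) {x : A} (hx : x ∈ Submodule.span ℂ f.cygen) :
    star x ∈ Submodule.span ℂ f.cygen := by
  induction hx using Submodule.span_induction with
  | mem a ha => exact Submodule.subset_span (f.star_gen_mem ha)
  | zero => rw [star_zero]; exact Submodule.zero_mem _
  | add a b _ _ ha hb => rw [star_add]; exact Submodule.add_mem _ ha hb
  | smul c a _ ha => rw [star_smul]; exact Submodule.smul_mem _ _ ha

/-- The span of the cycline generators as a non-unital star subalgebra. -/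
noncomputable def cyalg (f : CKFamily Λ A) : NonUnitalStarSubalgebra ℂ A where
  carrier := ↑(Submodule.span ℂ f.cygen)
  add_mem' := fun ha hb => Submodule.add_mem _ ha hb
  zero_mem' := Submodule.zero_mem _
  mul_mem' := fun ha hb => f.span_mul_mem ha hb
  smul_mem' := fun c x hx => Submodule.smul_mem _ c hx
  star_mem' := fun hx => f.span_star_mem hx

lemma adjoin_eq_span (f : CKFamily Λ A) :
    (NonUnitalStarAlgebra.adjoin ℂ f.cygen : Set A) = ↑(Submodule.span ℂ f.cygen) := by
  apply Set.Subset.antisymm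
  · exact NonUnitalStarAlgebra.adjoin_le (S := f.cyalg) Submodule.subset_span
  · intro x hx
    induction hx using Submodule.span_induction with
    | mem a ha => exact NonUnitalStarAlgebra.subset_adjoin ℂ _ ha
    | zero => exact zero_mem _
    | add a b _ _ ha hb => exact add_mem ha hb
    | smul c a _ ha => exact SMulMemClass.smul_mem c ha

lemma cycline_eq_closure_span (f : CKFamily Λ A) :
    f.cycline = closure ↑(Submodule.span ℂ f.cygen) := by
  have h1 : f.cycline = CKFamily.gen f.cygen := rfl
  rw [h1]
  unfold gen
  rw [f.adjoin_eq_span]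

end CKFamily

end CStarLemmas3
section CStarFinal

variable {k : ℕ} {Λ : KGraph k} {A : Type*} [NonUnitalCStarAlgebra A]

namespace CKFamily

lemma conj_span_mem (f : CKFamily Λ A) (α β : Λ.Mor) (hαβ : Λ.src α = Λ.src β) {y : A}
    (hy : y ∈ Submodule.span ℂ f.cygen) :
    (f.S α * star (f.S β)) * y * star (f.S α * star (f.S β)) ∈ Submodule.span ℂ f.cygen := by
  induction hy using Submodule.span_induction with
  | mem a ha =>
    obtain ⟨μ, ν, hs, rfl⟩ := ha
    exact f.conj_gen_mem α β μ ν hαβ hs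
  | zero => rw [mul_zero, zero_mul]; exact Submodule.zero_mem _
  | add a b _ _ ha hb => rw [mul_add, add_mul]; exact Submodule.add_mem _ ha hb
  | smul c a _ ha => rw [mul_smul_comm, smul_mul_assoc]; exact Submodule.smul_mem _ _ ha

lemma conj_cycline (f : CKFamily Λ A) (α β : Λ.Mor) (hαβ : Λ.src α = Λ.src β) {x : A}
    (hx : x ∈ f.cycline) :
    (f.S α * star (f.S β)) * x * star (f.S α * star (f.S β)) ∈ f.cycline := by
  rw [f.cycline_eq_closure_span] at hx ⊢
  have cont : Continuous fun y : A =>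
      (f.S α * star (f.S β)) * y * star (f.S α * star (f.S β)) :=
    (continuous_const.mul continuous_id).mul continuous_const
  have himg := mem_closure_image cont.continuousAt hx
  refine closure_mono ?_ himg
  rintro z ⟨y, hy, rfl⟩
  exact f.conj_span_mem α β hαβ hy

end CKFamily

end CStarFinal
open CKFamily in
/-- The cycline subalgebra `M_Λ` is regular in `C*(Λ)`: every standard generator
`s_α s_β*` normalizes `M_Λ`, and consequently the set of normalizers of `M_Λ`
generates `C*(Λ)`. -/
theorem cycline_regular {k : ℕ} (Λ : KGraph k)
    {A : Type*} [NonUnitalCStarAlgebra A] (f : CKFamily Λ A)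
    (hgen : gen (Set.range f.S) = Set.univ) :
    (∀ α β : Λ.Mor, Λ.src α = Λ.src β → ∀ x ∈ f.cycline,
        (f.S α * star (f.S β)) * x * star (f.S α * star (f.S β)) ∈ f.cycline ∧
        star (f.S α * star (f.S β)) * x * (f.S α * star (f.S β)) ∈ f.cycline) ∧
    gen {x : A | ∀ m ∈ f.cycline,
        x * m * star x ∈ f.cycline ∧ star x * m * x ∈ f.cycline} = Set.univ := by
  have part1 : ∀ α β : Λ.Mor, Λ.src α = Λ.src β → ∀ x ∈ f.cycline,
      (f.S α * star (f.S β)) * x * star (f.S α * star (f.S β)) ∈ f.cycline ∧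
      star (f.S α * star (f.S β)) * x * (f.S α * star (f.S β)) ∈ f.cycline := by
    intro α β hαβ x hx
    refine ⟨f.conj_cycline α β hαβ hx, ?_⟩
    have h1 : star (f.S α * star (f.S β)) = f.S β * star (f.S α) := by
      rw [star_mul, star_star]
    have h2 : f.S α * star (f.S β) = star (f.S β * star (f.S α)) := by
      rw [star_mul, star_star]
    rw [h1, h2]
    exact f.conj_cycline β α hαβ.symm hx
  refine ⟨part1, ?_⟩
  have hr : Set.range f.S ⊆ {x : A | ∀ m ∈ f.cycline,
      x * m * star x ∈ f.cycline ∧ star x * m * x ∈ f.cycline} := by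
    rintro x ⟨μ, rfl⟩ m hm
    have hPμ : f.S μ = f.S μ * star (f.S (Λ.idm (Λ.src μ))) := by
      rw [f.S_star_idm, f.S_mul_idm]
    rw [hPμ]
    exact part1 μ (Λ.idm (Λ.src μ)) (Λ.src_idm _).symm m hm
  have hsub : CKFamily.gen (Set.range f.S) ⊆ CKFamily.gen {x : A | ∀ m ∈ f.cycline,
      x * m * star x ∈ f.cycline ∧ star x * m * x ∈ f.cycline} :=
    closure_mono (SetLike.coe_subset_coe.mpr
      (NonUnitalStarAlgebra.adjoin_le (hr.trans (NonUnitalStarAlgebra.subset_adjoin ℂ _))))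
  exact Set.eq_univ_of_univ_subset (hgen ▸ hsub)
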